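/- (Ni–Takagi perturbation lemma.) Let n ≥ 1 be an integer and a > 0. Let φ : ℝ → ℝ be twice continuously differentiable with φ'(0) = 0 and φ''(r) < 0 for all r ∈ [0, a], and define Φ : ℝ^n → ℝ by Φ(x) = φ(|x|) (Φ is twice continuously differentiable on the closed ball B̄(0,a)). Then there exists δ > 0 such that: for every function ψ that is twice continuously differentiable on a neighborhood of B̄(0,a) with ∇ψ(0) = 0 and sup_{x ∈ B̄(0,a)} ( |ψ(x) − Φ(x)| + ‖∇ψ(x) − ∇Φ(x)‖ + ‖D²ψ(x) − D²Φ(x)‖ ) < δ, one has ∇ψ(x) ≠ 0 for all x ∈ B̄(0,a) with x ≠ 0. -/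

import Mathlib

set_option maxHeartbeats 1000000

open Set Metric

lemma line1 {E : Type*} [NormedAddCommGroup E] [NormedSpace ℝ E]
    {f : E → ℝ} {t : ℝ} (x : E) (hf : DifferentiableAt ℝ f (t • x)) :
    HasDerivAt (fun s : ℝ => f (s • x)) (fderiv ℝ f (t • x) x) t := by
  have hline : HasDerivAt (fun s : ℝ => s • x) x t := by
    simpa using (hasDerivAt_id t).smul_const x
  exact hf.hasFDerivAt.comp_hasDerivAt t hline

lemma line2 {E : Type*} [NormedAddCommGroup E] [NormedSpace ℝ E]
    {f : E → ℝ} {U : Set E} (hU : IsOpen U) (hf : ContDiffOn ℝ 2 f U)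
    (x : E) {t : ℝ} (ht : t • x ∈ U) :
    HasDerivAt (fun s : ℝ => fderiv ℝ f (s • x) x)
      (fderiv ℝ (fderiv ℝ f) (t • x) x x) t := by
  have hline : HasDerivAt (fun s : ℝ => s • x) x t := by
    simpa using (hasDerivAt_id t).smul_const x
  have hF : ContDiffOn ℝ 1 (fderiv ℝ f) U := hf.fderiv_of_isOpen hU (by norm_num)
  have hFd : DifferentiableAt ℝ (fderiv ℝ f) (t • x) :=
    (hF.contDiffAt (hU.mem_nhds ht)).differentiableAt one_ne_zero
  have h1 : HasDerivAt (fun s : ℝ => fderiv ℝ f (s • x)) (fderiv ℝ (fderiv ℝ f) (t • x) x) t :=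
    hFd.hasFDerivAt.comp_hasDerivAt t hline
  exact ((ContinuousLinearMap.apply ℝ ℝ x).hasFDerivAt.comp_hasDerivAt t h1)

/-- Ni–Takagi perturbation lemma: if `Φ(x) = φ(|x|)` is a radial `C²`
function with `φ'(0) = 0` and `φ'' < 0` on `[0, a]`, then there is `δ > 0` so that any `ψ`
that is `C²` near the closed ball `B̄(0,a)`, has a critical point at `0`, and is `δ`-close
to `Φ` in `C²` on `B̄(0,a)`, has no critical point in `B̄(0,a) \ {0}`. -/
theorem stmt_12 (n : ℕ) (hn : 1 ≤ n) (a : ℝ) (ha : 0 < a)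
    (φ : ℝ → ℝ) (hφ : ContDiff ℝ 2 φ) (hφ'0 : deriv φ 0 = 0)
    (hφ'' : ∀ r ∈ Set.Icc (0 : ℝ) a, deriv (deriv φ) r < 0) :
    ∃ δ > (0 : ℝ), ∀ ψ : EuclideanSpace ℝ (Fin n) → ℝ,
      (∃ Uo : Set (EuclideanSpace ℝ (Fin n)), IsOpen Uo ∧
        Metric.closedBall (0 : EuclideanSpace ℝ (Fin n)) a ⊆ Uo ∧ ContDiffOn ℝ 2 ψ Uo) →
      gradient ψ 0 = 0 →
      (∀ x ∈ Metric.closedBall (0 : EuclideanSpace ℝ (Fin n)) a,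
        |ψ x - φ ‖x‖| + ‖gradient ψ x - gradient (fun y => φ ‖y‖) x‖ +
          ‖iteratedFDeriv ℝ 2 ψ x - iteratedFDeriv ℝ 2 (fun y => φ ‖y‖) x‖ < δ) →
      ∀ x ∈ Metric.closedBall (0 : EuclideanSpace ℝ (Fin n)) a, x ≠ 0 →
        gradient ψ x ≠ 0 := by
  classical
  set E := EuclideanSpace ℝ (Fin n)
  set Φ : E → ℝ := fun y => φ ‖y‖ with hΦdef
  -- regularity of φ
  have hφ1 : ContDiff ℝ 1 (deriv φ) := by
    have := (contDiff_succ_iff_deriv (n := 1)).mp (by norm_num at hφ ⊢; exact hφ)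
    exact this.2.2
  have hφ''cont : Continuous (deriv (deriv φ)) := hφ1.continuous_deriv le_rfl
  -- max of φ'' on [0,a]
  obtain ⟨r₀, hr₀, hmax⟩ := isCompact_Icc.exists_isMaxOn (nonempty_Icc.mpr ha.le)
    hφ''cont.continuousOn (f := deriv (deriv φ))
  set c : ℝ := -(deriv (deriv φ) r₀) with hc
  have hcpos : 0 < c := by simpa [hc] using hφ'' r₀ hr₀
  have hle : ∀ r ∈ Icc (0:ℝ) a, deriv (deriv φ) r ≤ -c := by
    intro r hr; simpa [hc] using hmax hr
  refine ⟨c / 2, by positivity, ?_⟩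
  rintro ψ ⟨Uo, hUo, hball, hψ⟩ hψ0 hclose x hx hx0 hgrad
  set r : ℝ := ‖x‖ with hr
  have hrpos : 0 < r := norm_pos_iff.mpr hx0
  have hra : r ≤ a := by simpa [hr] using mem_closedBall_zero_iff.mp hx
  -- points on the segment
  have hmem : ∀ s ∈ Icc (0:ℝ) 1, s • x ∈ closedBall (0:E) a := by
    intro s hs
    rw [mem_closedBall_zero_iff, norm_smul, Real.norm_eq_abs, abs_of_nonneg hs.1]
    calc s * r ≤ 1 * r := by nlinarith [hs.2, hrpos.le]
    _ ≤ a := by simpa using hra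
  have hmemU : ∀ s ∈ Icc (0:ℝ) 1, s • x ∈ Uo := fun s hs => hball (hmem s hs)
  -- Φ is C² away from 0
  have hΦ : ContDiffOn ℝ 2 Φ ({(0:E)}ᶜ) := by
    intro y hy
    exact ((hφ.contDiffAt.comp y (contDiffAt_id.norm ℝ (by simpa using hy))).contDiffWithinAt)
  -- the radial derivative function
  set u : ℝ → ℝ := fun s => fderiv ℝ ψ (s • x) x with hu
  -- gradient/fderiv link
  have hgradf : ∀ z : E, fderiv ℝ ψ z = (InnerProductSpace.toDual ℝ E) (gradient ψ z) := by
    intro z; simp [gradient]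
  have hu0 : u 0 = 0 := by
    simp only [hu, zero_smul, hgradf, hψ0]
    simp
  have hu1 : u 1 = 0 := by
    simp only [hu, one_smul, hgradf, hgrad]
    simp
  -- continuity of u on [0,1]
  have hFcont : ContinuousOn (fderiv ℝ ψ) Uo := hψ.continuousOn_fderiv_of_isOpen hUo (by norm_num)
  have hucont : ContinuousOn u (Icc 0 1) := by
    apply ContinuousOn.clm_apply _ continuousOn_const
    exact hFcont.comp ((continuous_id.smul continuous_const).continuousOn) hmemU
  -- derivative of u on (0,1) is negative
  have hderiv : ∀ t ∈ Ioo (0:ℝ) 1, deriv u t < 0 := by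
    intro t ht
    have htx : t • x ∈ Uo := hmemU t ⟨ht.1.le, ht.2.le⟩
    have hDu : HasDerivAt u (fderiv ℝ (fderiv ℝ ψ) (t • x) x x) t := line2 hUo hψ x htx
    -- compute the Φ Hessian along the ray
    have hvmap : ∀ s : ℝ, 0 < s → fderiv ℝ Φ (s • x) x = deriv φ (s * r) * r := by
      intro s hs
      have hsx : s • x ≠ 0 := smul_ne_zero (ne_of_gt hs) hx0
      have hd : DifferentiableAt ℝ Φ (s • x) :=
        (hΦ.contDiffAt (isOpen_compl_singleton.mem_nhds hsx)).differentiableAt two_ne_zero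
      have H1 : HasDerivAt (fun s' : ℝ => Φ (s' • x)) (fderiv ℝ Φ (s • x) x) s := line1 x hd
      have H2 : HasDerivAt (fun s' : ℝ => φ (s' * r)) (deriv φ (s * r) * r) s :=
        ((hφ.differentiable two_ne_zero _).hasDerivAt).comp s (hasDerivAt_mul_const r)
      have H3 : (fun s' : ℝ => Φ (s' • x)) =ᶠ[nhds s] (fun s' : ℝ => φ (s' * r)) := by
        filter_upwards [eventually_gt_nhds hs] with s' hs'
        simp [hΦdef, norm_smul, abs_of_pos hs', hr]
      exact H1.unique (H3.hasDerivAt_iff.mpr H2)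
    have hveq : (fun s : ℝ => fderiv ℝ Φ (s • x) x) =ᶠ[nhds t]
        (fun s : ℝ => deriv φ (s * r) * r) := by
      filter_upwards [eventually_gt_nhds ht.1] with s hs using hvmap s hs
    have H4 : HasDerivAt (fun s : ℝ => deriv φ (s * r) * r)
        ((deriv (deriv φ) (t * r) * r) * r) t := by
      exact (((hφ1.differentiable one_ne_zero _).hasDerivAt).comp t (hasDerivAt_mul_const r)).mul_const r
    have hDΦ : HasDerivAt (fun s : ℝ => fderiv ℝ Φ (s • x) x)
        (fderiv ℝ (fderiv ℝ Φ) (t • x) x x) t := by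
      have hsx : t • x ≠ 0 := smul_ne_zero (ne_of_gt ht.1) hx0
      exact line2 isOpen_compl_singleton hΦ x (by simpa using hsx)
    have hHess : fderiv ℝ (fderiv ℝ Φ) (t • x) x x = deriv (deriv φ) (t * r) * r * r :=
      hDΦ.unique (hveq.hasDerivAt_iff.mpr H4)
    -- bound via closeness
    have hcb : t • x ∈ closedBall (0:E) a := hmem t ⟨ht.1.le, ht.2.le⟩
    have hclose' : ‖iteratedFDeriv ℝ 2 ψ (t • x) - iteratedFDeriv ℝ 2 Φ (t • x)‖ < c / 2 := by
      have := hclose (t • x) hcb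
      have h1 : (0:ℝ) ≤ |ψ (t • x) - φ ‖t • x‖| := abs_nonneg _
      have h2 : (0:ℝ) ≤ ‖gradient ψ (t • x) - gradient Φ (t • x)‖ := norm_nonneg _
      linarith [this]
    have happ : |(iteratedFDeriv ℝ 2 ψ (t • x) - iteratedFDeriv ℝ 2 Φ (t • x)) ![x, x]| ≤
        ‖iteratedFDeriv ℝ 2 ψ (t • x) - iteratedFDeriv ℝ 2 Φ (t • x)‖ * (r * r) := by
      have := (iteratedFDeriv ℝ 2 ψ (t • x) - iteratedFDeriv ℝ 2 Φ (t • x)).le_opNorm ![x, x]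
      simpa [Fin.prod_univ_two, hr, mul_assoc] using this
    have hiter : ∀ f : E → ℝ, iteratedFDeriv ℝ 2 f (t • x) ![x, x] =
        fderiv ℝ (fderiv ℝ f) (t • x) x x := by
      intro f
      simpa using iteratedFDeriv_two_apply f (t • x) ![x, x]
    have hsub : (iteratedFDeriv ℝ 2 ψ (t • x) - iteratedFDeriv ℝ 2 Φ (t • x)) ![x, x] =
        fderiv ℝ (fderiv ℝ ψ) (t • x) x x - fderiv ℝ (fderiv ℝ Φ) (t • x) x x := by
      rw [ContinuousMultilinearMap.sub_apply, hiter ψ, hiter Φ]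
    have htr : t * r ∈ Icc (0:ℝ) a := by
      constructor
      · exact mul_nonneg ht.1.le hrpos.le
      · nlinarith [ht.2, hrpos.le, hra]
    have hφ''le : deriv (deriv φ) (t * r) ≤ -c := hle _ htr
    have hbound : fderiv ℝ (fderiv ℝ ψ) (t • x) x x < 0 := by
      have h5 : fderiv ℝ (fderiv ℝ ψ) (t • x) x x - fderiv ℝ (fderiv ℝ Φ) (t • x) x x ≤
          c / 2 * (r * r) := by
        calc _ ≤ |(iteratedFDeriv ℝ 2 ψ (t • x) - iteratedFDeriv ℝ 2 Φ (t • x)) ![x, x]| := by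
              rw [hsub]; exact le_abs_self _
        _ ≤ ‖iteratedFDeriv ℝ 2 ψ (t • x) - iteratedFDeriv ℝ 2 Φ (t • x)‖ * (r * r) := happ
        _ ≤ c / 2 * (r * r) := by nlinarith [hclose'.le, mul_pos hrpos hrpos]
      nlinarith [hHess, mul_pos hrpos hrpos]
    rwa [hDu.deriv]
  -- u is strictly decreasing on [0,1]
  have hanti : StrictAntiOn u (Icc 0 1) := by
    apply strictAntiOn_of_deriv_neg (convex_Icc 0 1) hucont
    intro t ht
    rw [interior_Icc] at ht
    exact hderiv t ht
  have : u 1 < u 0 := hanti (by norm_num) (by norm_num) (by norm_num)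
  rw [hu0, hu1] at this
  exact lt_irrefl 0 this
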